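/- arXiv:2408.14662 — 2 statements merged into one kernel-verified Lean document; each statement's English description precedes it below -/
import Mathlib

section
/- Let ψ be a real-analytic solution of {ψ, Δψ} = 0 on an open connected set Ω ⊆ ℝ², and let Γ be a real-analytic curve consisting of points where ∇ψ = 0, with tangent vector τ and normal n at a point x ∈ Γ. Then ∂_τ∂_n ψ(x) = 0 and ∂_τ∂_τ ψ(x) = 0; consequently, D²ψ(x) = 0 if and only if Δψ(x) = 0. -/
/-!
Along the curve of critical points the gradient vanishes identically, so differentiating `∇ψ(γ t) = 0`
at `t = 0` gives `D²ψ(x) τ = 0`. A symmetric bilinear form on `ℝ²` that kills a nonzero vector `τ`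
is a multiple of `n ⊗ n`, and the multiple is read off from its trace, which for `D²ψ(x)` is `Δψ(x)`.
-/

noncomputable section

/-- Poisson bracket `{f, g} = ∂₁f ∂₂g − ∂₂f ∂₁g` on `ℝ²`. -/
def bracket (f g : ℝ × ℝ → ℝ) (x : ℝ × ℝ) : ℝ :=
  fderiv ℝ f x (1, 0) * fderiv ℝ g x (0, 1) - fderiv ℝ f x (0, 1) * fderiv ℝ g x (1, 0)

/-- The Laplacian on `ℝ²`. -/
def lap (f : ℝ × ℝ → ℝ) (x : ℝ × ℝ) : ℝ :=
  iteratedFDeriv ℝ 2 f x ![(1, 0), (1, 0)] + iteratedFDeriv ℝ 2 f x ![(0, 1), (0, 1)]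

open Filter Topology

section
variable {E F : Type*} [NormedAddCommGroup E] [NormedSpace ℝ E]
  [NormedAddCommGroup F] [NormedSpace ℝ F]

theorem fderiv_apply_deriv_eq_zero_of_eventually_eq_zero {f : E → F} {γ : ℝ → E} {t : ℝ}
    (hf : DifferentiableAt ℝ f (γ t)) (hγ : DifferentiableAt ℝ γ t)
    (h : ∀ᶠ s in 𝓝 t, f (γ s) = 0) : fderiv ℝ f (γ t) (deriv γ t) = 0 :=
  (hf.hasFDerivAt.comp_hasDerivAt t hγ.hasDerivAt).unique
    ((hasDerivAt_const t (0 : F)).congr_of_eventuallyEq h)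

theorem iteratedFDeriv_two_eq_zero_iff {f : E → F} {x : E} :
    iteratedFDeriv ℝ 2 f x = 0 ↔ fderiv ℝ (fderiv ℝ f) x = 0 := by
  constructor
  · intro h
    refine ContinuousLinearMap.ext fun v ↦ ContinuousLinearMap.ext fun w ↦ ?_
    simpa [iteratedFDeriv_two_apply] using congr($h ![v, w])
  · intro h
    ext m
    simp [iteratedFDeriv_two_apply, h]

end

section
open ContinuousLinearMap

theorem ContinuousLinearMap.apply_apply_eq_coords (B : ℝ × ℝ →L[ℝ] ℝ × ℝ →L[ℝ] ℝ) (v w : ℝ × ℝ) :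
    B v w = v.1 * w.1 * B (1, 0) (1, 0) + v.1 * w.2 * B (1, 0) (0, 1)
      + v.2 * w.1 * B (0, 1) (1, 0) + v.2 * w.2 * B (0, 1) (0, 1) := by
  obtain ⟨a, b⟩ := v
  obtain ⟨c, d⟩ := w
  dsimp only
  rw [show ((a, b) : ℝ × ℝ) = a • (1, 0) + b • (0, 1) by simp,
    show ((c, d) : ℝ × ℝ) = c • (1, 0) + d • (0, 1) by simp]
  simp only [map_add, map_smul, add_apply, smul_apply, smul_eq_mul]
  ring

theorem sq_add_sq_mul_apply_of_apply_eq_zero (B : ℝ × ℝ →L[ℝ] ℝ × ℝ →L[ℝ] ℝ)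
    (hB : ∀ v w, B v w = B w v) {τ : ℝ × ℝ} (hτ : B τ = 0) (v w : ℝ × ℝ) :
    (τ.1 ^ 2 + τ.2 ^ 2) * B v w =
      (B (1, 0) (1, 0) + B (0, 1) (0, 1)) * (τ.1 * v.2 - τ.2 * v.1) * (τ.1 * w.2 - τ.2 * w.1) := by
  have h₁ := congr($hτ (1, 0))
  have h₂ := congr($hτ (0, 1))
  have hsymm := hB (0, 1) (1, 0)
  rw [B.apply_apply_eq_coords] at h₁ h₂ ⊢
  simp only [zero_apply, mul_one, mul_zero, hsymm] at h₁ h₂ ⊢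
  linear_combination ((v.1 * w.1 - v.2 * w.2) * τ.1 + (v.1 * w.2 + v.2 * w.1) * τ.2) * h₁
    + ((v.1 * w.2 + v.2 * w.1) * τ.1 - (v.1 * w.1 - v.2 * w.2) * τ.2) * h₂

theorem eq_zero_iff_apply_add_apply_eq_zero_of_apply_eq_zero (B : ℝ × ℝ →L[ℝ] ℝ × ℝ →L[ℝ] ℝ)
    (hB : ∀ v w, B v w = B w v) {τ : ℝ × ℝ} (hτ : B τ = 0) (hτ₀ : τ ≠ 0) :
    B = 0 ↔ B (1, 0) (1, 0) + B (0, 1) (0, 1) = 0 := by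
  refine ⟨fun h ↦ by simp [h], fun h ↦ ?_⟩
  have hpos : τ.1 ^ 2 + τ.2 ^ 2 ≠ 0 := by
    contrapose! hτ₀
    ext <;> simp only [Prod.fst_zero, Prod.snd_zero] <;> nlinarith [sq_nonneg τ.1, sq_nonneg τ.2]
  refine ContinuousLinearMap.ext fun v ↦ ContinuousLinearMap.ext fun w ↦ ?_
  simpa [h, hpos] using sq_add_sq_mul_apply_of_apply_eq_zero B hB hτ v w

end

theorem stmt5_general (Ω : Set (ℝ × ℝ))
    (ψ : ℝ × ℝ → ℝ) (hψ : AnalyticOnNhd ℝ ψ Ω)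
    (γ : ℝ → ℝ × ℝ) (ε : ℝ) (hε : 0 < ε)
    (hγ : AnalyticOnNhd ℝ γ (Set.Ioo (-ε) ε))
    (hγΩ : ∀ t ∈ Set.Ioo (-ε) ε, γ t ∈ Ω)
    (hcrit : ∀ t ∈ Set.Ioo (-ε) ε, fderiv ℝ ψ (γ t) = 0)
    (x : ℝ × ℝ) (hx : γ 0 = x)
    (τ n : ℝ × ℝ) (hτ : τ = deriv γ 0) (hτu : ‖τ‖ = 1)
    (hn : n = (-τ.2, τ.1)) :
    iteratedFDeriv ℝ 2 ψ x ![τ, n] = 0 ∧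
    iteratedFDeriv ℝ 2 ψ x ![τ, τ] = 0 ∧
    (iteratedFDeriv ℝ 2 ψ x = 0 ↔ lap ψ x = 0) := by
  subst hx hτ hn
  have h0 : (0 : ℝ) ∈ Set.Ioo (-ε) ε := ⟨neg_lt_zero.2 hε, hε⟩
  have hψx : AnalyticAt ℝ ψ (γ 0) := hψ _ (hγΩ 0 h0)
  have hsymm : IsSymmSndFDerivAt ℝ ψ (γ 0) := hψx.contDiffAt.isSymmSndFDerivAt_of_omega
  have hker : fderiv ℝ (fderiv ℝ ψ) (γ 0) (deriv γ 0) = 0 :=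
    fderiv_apply_deriv_eq_zero_of_eventually_eq_zero hψx.fderiv.differentiableAt
      (hγ 0 h0).differentiableAt (eventually_of_mem (Ioo_mem_nhds (neg_lt_zero.2 hε) hε) hcrit)
  have hτ₀ : deriv γ 0 ≠ 0 := fun h ↦ by simp [h] at hτu
  simp only [lap, iteratedFDeriv_two_eq_zero_iff, iteratedFDeriv_two_apply, Matrix.cons_val_zero,
    Matrix.cons_val_one, hker, zero_apply, true_and]
  exact eq_zero_iff_apply_add_apply_eq_zero_of_apply_eq_zero _ hsymm hker hτ₀

theorem stmt5 (Ω : Set (ℝ × ℝ)) (hΩ : IsOpen Ω) (hconn : IsConnected Ω)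
    (ψ : ℝ × ℝ → ℝ) (hψ : AnalyticOnNhd ℝ ψ Ω)
    (heuler : ∀ x ∈ Ω, bracket ψ (lap ψ) x = 0)
    (γ : ℝ → ℝ × ℝ) (ε : ℝ) (hε : 0 < ε)
    (hγ : AnalyticOnNhd ℝ γ (Set.Ioo (-ε) ε))
    (hγΩ : ∀ t ∈ Set.Ioo (-ε) ε, γ t ∈ Ω)
    (hcrit : ∀ t ∈ Set.Ioo (-ε) ε, fderiv ℝ ψ (γ t) = 0)
    (x : ℝ × ℝ) (hx : γ 0 = x)
    (τ n : ℝ × ℝ) (hτ : τ = deriv γ 0) (hτu : ‖τ‖ = 1)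
    (hn : n = (-τ.2, τ.1)) :
    iteratedFDeriv ℝ 2 ψ x ![τ, n] = 0 ∧
    iteratedFDeriv ℝ 2 ψ x ![τ, τ] = 0 ∧
    (iteratedFDeriv ℝ 2 ψ x = 0 ↔ lap ψ x = 0) :=
  stmt5_general Ω ψ hψ γ ε hε hγ hγΩ hcrit x hx τ n hτ hτu hn
end
end

section
/- Let ψ be real-analytic on an open set Ω ⊆ ℝ², and let Γ ⊂ Ω be a real-analytic curve such that every point y ∈ Γ has degree of vanishing d_ψ(y) = d for some fixed d ≥ 3 (all derivatives of ψ of order < d vanish on Γ). Then for every x ∈ Γ, the degree of vanishing of Δψ at x equals d − 2, i.e., all derivatives of Δψ of order < d − 2 vanish at x and some derivative of order d − 2 does not. -/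
/-!
Write `d = n + 3`. Along `Γ = γ(I)` the derivative `D^{n+2}ψ` vanishes identically, so
differentiating along the curve gives `D^{n+3}ψ(γ t)(γ' t, ·) = 0`. Since `γ` is analytic and not
constant, `γ' = (t - t₀)^j • g` near any `t₀` with `g t₀ ≠ 0`, and continuity then gives a fixed
direction `v ≠ 0` with `D^{n+3}ψ(γ t₀)(v, ·) = 0`. By symmetry the form `A = D^{n+3}ψ(γ t₀)`
vanishes as soon as one argument is `v`, so on `ℝ²` it is `c • β^{⊗(n+3)}` with `c ≠ 0` and `β`
a linear form with kernel `ℝ v`. Now `D^k(Δψ)` is the trace of `D^{k+2}ψ` over its last two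
slots: it vanishes for `k ≤ n` and equals `c |β|² β^{⊗(n+1)} ≠ 0` for `k = n + 1`.
-/

noncomputable section

/-- Degree of vanishing: least `k ≥ 1` with `Dᵏf(x) ≠ 0`. -/
def degVan (f : ℝ × ℝ → ℝ) (x : ℝ × ℝ) : ℕ :=
  sInf {k | 1 ≤ k ∧ iteratedFDeriv ℝ k f x ≠ 0}

open Function Set Filter Topology

open scoped ContDiff

theorem MultilinearMap.apply_eq_prod_smul_of_apply_eq_zero {R M N ι : Type*} [CommSemiring R]
    [AddCommMonoid M] [Module R M] [AddCommMonoid N] [Module R N] [Fintype ι] [DecidableEq ι]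
    (A : MultilinearMap R (fun _ : ι => M) N) {u v : M} {β : M → R}
    (hβ : ∀ w, ∃ c : R, w = c • v + β w • u) (hA : ∀ m i, m i = v → A m = 0) (m : ι → M) :
    A m = (∏ i, β (m i)) • A (fun _ => u) := by
  choose c hc using hβ
  have hm : m = (fun i => c (m i) • v) + (fun i => β (m i) • u) := funext fun i => hc (m i)
  conv_lhs => rw [hm, A.map_add_univ]
  rw [Finset.sum_eq_single ∅]
  · rw [Finset.piecewise_empty, A.map_smul_univ]
  · intro s _ hs
    obtain ⟨i, hi⟩ := Finset.nonempty_iff_ne_empty.2 hs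
    rw [← update_eq_self i (s.piecewise _ _), s.piecewise_eq_of_mem _ _ hi, A.map_update_smul,
      hA _ i (update_self ..), smul_zero]
  · exact fun h => absurd (Finset.mem_univ _) h

section NontriviallyNormedField

variable {𝕜 E F : Type*} [NontriviallyNormedField 𝕜] [NormedAddCommGroup E] [NormedSpace 𝕜 E]
  [NormedAddCommGroup F] [NormedSpace 𝕜 F]

theorem ContDiffAt.iteratedFDeriv_succ_apply_eq_zero {f : E → F} {x : E} (hf : ContDiffAt 𝕜 ω f x)
    {n : ℕ} {v : E} (hv : fderiv 𝕜 (iteratedFDeriv 𝕜 n f) x v = 0) (m : Fin (n + 1) → E)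
    (i : Fin (n + 1)) (hi : m i = v) : iteratedFDeriv 𝕜 (n + 1) f x m = 0 := by
  rw [← hf.iteratedFDeriv_comp_perm m (Equiv.swap 0 i), iteratedFDeriv_succ_apply_left]
  simp [hi, hv]

theorem iteratedFDeriv_snoc_snoc {f : E → F} {x : E} {k : ℕ} (hf : ContDiffAt 𝕜 (k + 2) f x)
    (m : Fin k → E) (a b : E) :
    iteratedFDeriv 𝕜 (k + 2) f x (Fin.snoc (Fin.snoc m a) b) =
      iteratedFDeriv 𝕜 k (fun y => iteratedFDeriv 𝕜 2 f y ![a, b]) x m := by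
  have hf'' : ContDiffAt 𝕜 k (fderiv 𝕜 (fderiv 𝕜 f)) x :=
    (hf.fderiv_right (m := k + 1) (by norm_cast)).fderiv_right (by norm_cast)
  let ev : (E →L[𝕜] E →L[𝕜] F) →L[𝕜] F :=
    (ContinuousLinearMap.apply 𝕜 F b).comp (ContinuousLinearMap.apply 𝕜 (E →L[𝕜] F) a)
  have hcomp : (fun y => iteratedFDeriv 𝕜 2 f y ![a, b]) = ev ∘ fderiv 𝕜 (fderiv 𝕜 f) := by
    ext y
    simp [iteratedFDeriv_two_apply, ev]
  rw [hcomp, ev.iteratedFDeriv_comp_left hf'' le_rfl, iteratedFDeriv_succ_apply_right,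
    iteratedFDeriv_succ_apply_right]
  simp [ev]

theorem exists_ne_zero_apply_eq_zero_of_analyticAt {w : 𝕜 → E} {L : 𝕜 → E →L[𝕜] F} {t₀ : 𝕜}
    (hw : AnalyticAt 𝕜 w t₀) (hw₀ : ¬ ∀ᶠ t in 𝓝 t₀, w t = 0) (hL : ContinuousAt L t₀)
    (hLw : ∀ᶠ t in 𝓝 t₀, L t (w t) = 0) : ∃ v ≠ 0, L t₀ v = 0 := by
  obtain ⟨j, g, hg, hg₀, hwg⟩ := hw.exists_eventuallyEq_pow_smul_nonzero_iff.2 hw₀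
  refine ⟨g t₀, hg₀, ?_⟩
  have hzero : ∀ᶠ t in 𝓝[≠] t₀, L t (g t) = 0 := by
    filter_upwards [nhdsWithin_le_nhds (hwg.and hLw), self_mem_nhdsWithin]
      with t ⟨hwt, hLt⟩ (ht : t ≠ t₀)
    rw [hwt, map_smul] at hLt
    exact (smul_eq_zero.1 hLt).resolve_left (pow_ne_zero _ (sub_ne_zero.2 ht))
  exact tendsto_nhds_unique ((hL.clm_apply hg.continuousAt).tendsto.mono_left nhdsWithin_le_nhds)
    (tendsto_const_nhds.congr' (hzero.mono fun _ h => h.symm))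

end NontriviallyNormedField

section RCLike

variable {𝕜 E F : Type*} [RCLike 𝕜] [NormedAddCommGroup E] [NormedSpace 𝕜 E] [CompleteSpace E]
  [NormedAddCommGroup F] [NormedSpace 𝕜 F]

theorem AnalyticOnNhd.exists_ne_zero_fderiv_apply_eq_zero {G : E → F} {V : Set E}
    {γ : 𝕜 → E} {U : Set 𝕜} (hV : IsOpen V) (hG : ContDiffOn 𝕜 1 G V)
    (hU : IsOpen U) (hU' : IsPreconnected U) (hγ : AnalyticOnNhd 𝕜 γ U) (hγV : MapsTo γ U V)
    {t₁ : 𝕜} (ht₁ : t₁ ∈ U) (hγc : ¬ ∀ t ∈ U, γ t = γ t₁) (hGγ : ∀ t ∈ U, G (γ t) = 0)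
    {t₀ : 𝕜} (ht₀ : t₀ ∈ U) : ∃ v ≠ 0, fderiv 𝕜 G (γ t₀) v = 0 := by
  refine exists_ne_zero_apply_eq_zero_of_analyticAt (w := deriv γ) (hγ.deriv t₀ ht₀) ?_
    ((hG.continuousOn_fderiv_of_isOpen hV le_rfl).continuousAt (hV.mem_nhds (hγV ht₀))
      |>.comp (hγ t₀ ht₀).continuousAt) ?_
  · exact fun h => hγc fun t ht => hU.is_const_of_deriv_eq_zero hU' hγ.differentiableOn
      (eqOn_zero_of_preconnected_of_eventuallyEq_zero hγ.deriv hU' ht₀ h) ht ht₁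
  · filter_upwards [hU.mem_nhds ht₀] with t ht
    have hGγ' : HasDerivAt (G ∘ γ) (fderiv 𝕜 G (γ t) (deriv γ t)) t :=
      ((hG.differentiableOn one_ne_zero _ (hγV ht)).differentiableAt (hV.mem_nhds (hγV ht)))
        |>.hasFDerivAt.comp_hasDerivAt t (hγ t ht).differentiableAt.hasDerivAt
    exact hGγ'.unique <| (hasDerivAt_const t 0).congr_of_eventuallyEq <|
      eventually_of_mem (hU.mem_nhds ht) hGγ

end RCLike

theorem degVan_eq_iff {f : ℝ × ℝ → ℝ} {x : ℝ × ℝ} {d : ℕ} (hd : 1 ≤ d) :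
    degVan f x = d ↔
      (∀ k, 1 ≤ k → k < d → iteratedFDeriv ℝ k f x = 0) ∧ iteratedFDeriv ℝ d f x ≠ 0 := by
  constructor
  · rintro rfl
    have hmem := Nat.sInf_mem (Nat.nonempty_of_pos_sInf hd)
    exact ⟨fun k hk hkd => not_not.1 fun h => Nat.notMem_of_lt_sInf hkd ⟨hk, h⟩, hmem.2⟩
  · rintro ⟨hlow, hd'⟩
    exact IsLeast.csInf_eq ⟨⟨hd, hd'⟩, fun k ⟨hk, hk'⟩ => not_lt.1 fun hkd => hk' (hlow k hk hkd)⟩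

theorem iteratedFDeriv_lap_apply {f : ℝ × ℝ → ℝ} {x : ℝ × ℝ} {k : ℕ}
    (hf : ContDiffAt ℝ (k + 2) f x) (m : Fin k → ℝ × ℝ) :
    iteratedFDeriv ℝ k (lap f) x m =
      iteratedFDeriv ℝ (k + 2) f x (Fin.snoc (Fin.snoc m (1, 0)) (1, 0)) +
        iteratedFDeriv ℝ (k + 2) f x (Fin.snoc (Fin.snoc m (0, 1)) (0, 1)) := by
  have hterm (w : ℝ × ℝ) : ContDiffAt ℝ k (fun y => iteratedFDeriv ℝ 2 f y ![w, w]) x :=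
    (ContinuousMultilinearMap.apply ℝ (fun _ : Fin 2 => ℝ × ℝ) ℝ ![w, w]).contDiff.contDiffAt.comp
      x (hf.iteratedFDeriv_right (by norm_cast))
  rw [iteratedFDeriv_snoc_snoc hf, iteratedFDeriv_snoc_snoc hf, ← add_apply,
    ← iteratedFDeriv_add_apply (hterm _) (hterm _)]
  rfl

theorem exists_apply_snoc_snoc_add_ne_zero {k : ℕ}
    (A : ContinuousMultilinearMap ℝ (fun _ : Fin (k + 2) => ℝ × ℝ) ℝ) (hA : A ≠ 0)
    {v : ℝ × ℝ} (hv : v ≠ 0) (hAv : ∀ m i, m i = v → A m = 0) :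
    ∃ m : Fin k → ℝ × ℝ,
      A (Fin.snoc (Fin.snoc m (1, 0)) (1, 0)) + A (Fin.snoc (Fin.snoc m (0, 1)) (0, 1)) ≠ 0 := by
  have hq : 0 < v.1 ^ 2 + v.2 ^ 2 := by
    have : v.1 ≠ 0 ∨ v.2 ≠ 0 := by
      contrapose! hv
      exact Prod.ext hv.1 hv.2
    rcases this with h | h <;> positivity
  set q := v.1 ^ 2 + v.2 ^ 2
  set u : ℝ × ℝ := (-v.2, v.1)
  set β : ℝ × ℝ → ℝ := fun w => (v.1 * w.2 - v.2 * w.1) / q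
  have hβ (w : ℝ × ℝ) : ∃ c : ℝ, w = c • v + β w • u :=
    ⟨(v.1 * w.1 + v.2 * w.2) / q, by ext <;> simp [β, u] <;> field_simp <;> ring⟩
  have hAβ (m : Fin (k + 2) → ℝ × ℝ) : A m = (∏ i, β (m i)) • A (fun _ => u) :=
    A.toMultilinearMap.apply_eq_prod_smul_of_apply_eq_zero hβ hAv m
  have hAu : A (fun _ => u) ≠ 0 := fun h =>
    hA (ContinuousMultilinearMap.ext fun m => by simpa [h] using hAβ m)
  have hβu : β u = 1 := by
    simp only [β, u]
    field_simp
    ring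
  have hsq (a : ℝ × ℝ) : A (Fin.snoc (Fin.snoc (fun _ => u) a) a) = β a ^ 2 * A (fun _ => u) := by
    rw [hAβ]
    simp [Fin.prod_univ_castSucc, hβu, sq]
  have hβe : β (1, 0) ^ 2 + β (0, 1) ^ 2 = q⁻¹ := by
    simp only [β]
    field_simp
    ring
  refine ⟨fun _ => u, ?_⟩
  rw [hsq, hsq, ← add_mul, hβe]
  exact mul_ne_zero (inv_ne_zero hq.ne') hAu

theorem stmt6 (Ω : Set (ℝ × ℝ)) (hΩ : IsOpen Ω)
    (ψ : ℝ × ℝ → ℝ) (hψ : AnalyticOnNhd ℝ ψ Ω)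
    (γ : ℝ → ℝ × ℝ) (ε : ℝ) (hε : 0 < ε)
    (hγ : AnalyticOnNhd ℝ γ (Set.Ioo (-ε) ε))
    (hγnc : ¬ ∀ t ∈ Set.Ioo (-ε) ε, γ t = γ 0)
    (hγΩ : ∀ t ∈ Set.Ioo (-ε) ε, γ t ∈ Ω)
    (d : ℕ) (hd : 3 ≤ d)
    (hdeg : ∀ t ∈ Set.Ioo (-ε) ε, degVan ψ (γ t) = d) :
    ∀ t ∈ Set.Ioo (-ε) ε,
      (∀ k, 1 ≤ k → k < d - 2 → iteratedFDeriv ℝ k (lap ψ) (γ t) = 0) ∧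
      iteratedFDeriv ℝ (d - 2) (lap ψ) (γ t) ≠ 0 ∧
      degVan (lap ψ) (γ t) = d - 2 := by
  obtain ⟨n, rfl⟩ : ∃ n, d = n + 3 := ⟨d - 3, by omega⟩
  have hdeg' (t : ℝ) (ht : t ∈ Ioo (-ε) ε) := (degVan_eq_iff (by omega)).1 (hdeg t ht)
  intro t ht
  rw [show n + 3 - 2 = n + 1 from rfl]
  have hψt : AnalyticAt ℝ ψ (γ t) := hψ _ (hγΩ t ht)
  obtain ⟨hlow, hA⟩ := hdeg' t ht
  obtain ⟨v, hv, hvA⟩ := hγ.exists_ne_zero_fderiv_apply_eq_zero hΩ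
    ((hψ.iteratedFDeriv (n + 2)).contDiffOn hΩ.uniqueDiffOn) isOpen_Ioo isPreconnected_Ioo hγΩ
    ⟨by linarith, hε⟩ hγnc (fun s hs => (hdeg' s hs).1 (n + 2) (by omega) (by omega)) ht
  obtain ⟨m, hm⟩ := exists_apply_snoc_snoc_add_ne_zero _ hA hv
    (hψt.contDiffAt.iteratedFDeriv_succ_apply_eq_zero hvA)
  have hlap_low (k : ℕ) (hk : 1 ≤ k) (hkn : k < n + 1) :
      iteratedFDeriv ℝ k (lap ψ) (γ t) = 0 := by
    ext m'
    rw [iteratedFDeriv_lap_apply hψt.contDiffAt m', hlow _ (by omega) (by omega)]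
    simp
  have hlap : iteratedFDeriv ℝ (n + 1) (lap ψ) (γ t) ≠ 0 := fun h =>
    hm (by rw [← iteratedFDeriv_lap_apply hψt.contDiffAt, h]; rfl)
  exact ⟨hlap_low, hlap, (degVan_eq_iff le_add_self).2 ⟨hlap_low, hlap⟩⟩
end
end
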